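/- arXiv:1112.4549 — 2 statements merged into one kernel-verified Lean document; each statement's English description precedes it below -/
import Mathlib

section
/- Let Λ be a row-finite locally convex k-graph with Λ⁰ finite. Suppose that Λ contains at least one cycle and that no cycle in Λ has an entrance. Then there exists a cycle τ in Λ such that r(τ)Λ^{e_i} = ∅ whenever d(τ)_i = 0, and such that r(τ)Λ^{≤∞} = {τ^∞}; in particular σ^{d(τ)}(x) = x for every x ∈ r(τ)Λ^{≤∞}. -/
open scoped ComplexOrder ENat

/-- A higher-rank graph (`k`-graph): a countable small category `Λ` together with a degree
functor `d : Λ → ℕᵏ` satisfying the unique factorisation property.  Morphisms ("paths") form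
the type `Path`; vertices are identified with the paths of degree `0`.  Composition is encoded
as a total function `comp` whose axioms only apply to composable pairs (`s μ = r ν`). -/
structure KGraph (k : ℕ) : Type 1 where
  Path : Type
  countable : Countable Path
  d : Path → Fin k → ℕ
  r : Path → Path
  s : Path → Path
  comp : Path → Path → Path
  d_r : ∀ lam, d (r lam) = 0
  d_s : ∀ lam, d (s lam) = 0
  r_vertex : ∀ v, d v = 0 → r v = v
  s_vertex : ∀ v, d v = 0 → s v = v
  r_comp : ∀ mu nu, s mu = r nu → r (comp mu nu) = r mu
  s_comp : ∀ mu nu, s mu = r nu → s (comp mu nu) = s nu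
  d_comp : ∀ mu nu, s mu = r nu → d (comp mu nu) = d mu + d nu
  comp_assoc : ∀ lam mu nu, s lam = r mu → s mu = r nu →
    comp (comp lam mu) nu = comp lam (comp mu nu)
  id_comp : ∀ lam, comp (r lam) lam = lam
  comp_id : ∀ lam, comp lam (s lam) = lam
  factor : ∀ (lam : Path) (m n : Fin k → ℕ), d lam = m + n →
    ∃! p : Path × Path, d p.1 = m ∧ d p.2 = n ∧ s p.1 = r p.2 ∧ comp p.1 p.2 = lam

namespace KGraph

variable {k : ℕ} (Λ : KGraph k)

/-- `v` is a vertex, i.e. a path of degree `0`. -/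
def IsVertex (v : Λ.Path) : Prop := Λ.d v = 0

/-- The set of minimal common extensions of `mu` and `nu`. -/
def MCE (mu nu : Λ.Path) : Set Λ.Path :=
  {lam | Λ.d lam = Λ.d mu ⊔ Λ.d nu ∧
    (∃ α, Λ.s mu = Λ.r α ∧ Λ.comp mu α = lam) ∧
    (∃ β, Λ.s nu = Λ.r β ∧ Λ.comp nu β = lam)}

/-- Pairs `(α, β)` with `μα = νβ ∈ MCE (μ, ν)`. -/
def MCEPairs (mu nu : Λ.Path) : Set (Λ.Path × Λ.Path) :=
  {p | Λ.s mu = Λ.r p.1 ∧ Λ.s nu = Λ.r p.2 ∧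
    Λ.comp mu p.1 = Λ.comp nu p.2 ∧ Λ.comp mu p.1 ∈ Λ.MCE mu nu}

/-- `Λ` is finitely aligned if all sets of minimal common extensions are finite. -/
def FinitelyAligned : Prop := ∀ mu nu : Λ.Path, (Λ.MCE mu nu).Finite

/-- `Λ` is row-finite if `vΛⁿ` is finite for every vertex `v` and `n ∈ ℕᵏ`. -/
def RowFinite : Prop :=
  ∀ (v : Λ.Path) (n : Fin k → ℕ), Λ.IsVertex v → {lam | Λ.r lam = v ∧ Λ.d lam = n}.Finite

/-- `Λ` is locally convex. -/
def LocallyConvex : Prop :=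
  ∀ i j : Fin k, i ≠ j → ∀ mu : Λ.Path, Λ.d mu = Pi.single i 1 →
    (∃ e, Λ.r e = Λ.r mu ∧ Λ.d e = Pi.single j 1) →
    ∃ e, Λ.r e = Λ.s mu ∧ Λ.d e = Pi.single j 1

/-- A subset `F ⊆ vΛ` is exhaustive if every `λ ∈ vΛ` has a common extension with some
member of `F`. -/
def Exhaustive (v : Λ.Path) (F : Set Λ.Path) : Prop :=
  ∀ lam, Λ.r lam = v → ∃ mu ∈ F, (Λ.MCE lam mu).Nonempty

/-- A generalised cycle: a pair of distinct paths `μ ≠ ν` with the same range and source such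
that every extension of `μ` has a common extension with `ν`. -/
def IsGenCycle (mu nu : Λ.Path) : Prop :=
  mu ≠ nu ∧ Λ.s mu = Λ.s nu ∧ Λ.r mu = Λ.r nu ∧
    ∀ τ, Λ.r τ = Λ.s mu → (Λ.MCE (Λ.comp mu τ) nu).Nonempty

/-- An entrance to the generalised cycle `(μ, ν)`. -/
def IsEntrance (mu nu τ : Λ.Path) : Prop :=
  Λ.r τ = Λ.s nu ∧ Λ.MCE (Λ.comp nu τ) mu = ∅

/-- A (conventional) cycle: a path of nonzero degree whose range and source coincide. -/
def IsCycle (lam : Λ.Path) : Prop := Λ.d lam ≠ 0 ∧ Λ.r lam = Λ.s lam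

/-- `Λ` contains no (conventional) cycles. -/
def NoCycles : Prop := ∀ lam : Λ.Path, Λ.r lam = Λ.s lam → Λ.d lam = 0

/-- A vertex `v` with `vΛ = {v}`. -/
def IsSource (v : Λ.Path) : Prop :=
  Λ.IsVertex v ∧ ∀ lam, Λ.r lam = v → lam = v

/-- `Ext (μ; E)`. -/
def Ext (mu : Λ.Path) (E : Set Λ.Path) : Set Λ.Path :=
  {τ | Λ.r τ = Λ.s mu ∧ ∃ nu ∈ E, Λ.comp mu τ ∈ Λ.MCE mu nu}

/-- No cycle in `Λ` has an entrance. -/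
def NoCycleHasEntrance : Prop :=
  ∀ lam, Λ.IsCycle lam → ∀ τ, Λ.r τ = Λ.r lam → (Λ.MCE τ lam).Nonempty

/-- `x` encodes a path of degree `m ∈ (ℕ ∪ {∞})ᵏ` in `Λ`, i.e. a degree-preserving functor
`Ω_{k,m} → Λ`, recorded as a total function on pairs `(p, q)`; only the values with
`p ≤ q ≤ m` are constrained. -/
def IsPathFun (m : Fin k → ℕ∞) (x : (Fin k → ℕ) → (Fin k → ℕ) → Λ.Path) : Prop :=
  (∀ p q : Fin k → ℕ, p ≤ q → (∀ i, (q i : ℕ∞) ≤ m i) → Λ.d (x p q) = q - p) ∧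
  (∀ p q : Fin k → ℕ, p ≤ q → (∀ i, (q i : ℕ∞) ≤ m i) →
    Λ.r (x p q) = x p p ∧ Λ.s (x p q) = x q q) ∧
  (∀ p q u : Fin k → ℕ, p ≤ q → q ≤ u → (∀ i, (u i : ℕ∞) ≤ m i) →
    Λ.comp (x p q) (x q u) = x p u)

/-- `x` is a boundary path of degree `m`. -/
def IsBoundaryFun (m : Fin k → ℕ∞) (x : (Fin k → ℕ) → (Fin k → ℕ) → Λ.Path) : Prop :=
  Λ.IsPathFun m x ∧
  ∀ p : Fin k → ℕ, (∀ i, (p i : ℕ∞) ≤ m i) →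
    ∀ E : Set Λ.Path, E.Finite → (∀ lam ∈ E, Λ.r lam = x p p) → Λ.Exhaustive (x p p) E →
      ∃ mu ∈ E, (∀ i, ((p i + Λ.d mu i : ℕ) : ℕ∞) ≤ m i) ∧ x p (p + Λ.d mu) = mu

/-- A path function `x` of degree `m` belongs to `Λ^{≤∞}`. -/
def IsLeInftyPath (m : Fin k → ℕ∞) (x : (Fin k → ℕ) → (Fin k → ℕ) → Λ.Path) : Prop :=
  Λ.IsPathFun m x ∧
  ∀ n : Fin k → ℕ, (∀ i, (n i : ℕ∞) ≤ m i) → ∀ i, (n i : ℕ∞) = m i →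
    ∀ e, ¬(Λ.r e = x n n ∧ Λ.d e = Pi.single i 1)

/-- The degree of `τ^∞` for a cycle (or initial cycle) `τ`: `∞` in the coordinates where
`d τ` is nonzero, `0` elsewhere. -/
def degInf (τ : Λ.Path) : Fin k → ℕ∞ := fun i => if Λ.d τ i = 0 then 0 else ⊤

/-- An initial cycle: `r μ = s μ` and `r(μ)Λ^{eᵢ} = ∅` whenever `d(μ)ᵢ = 0`. -/
def IsInitialCycle (mu : Λ.Path) : Prop :=
  Λ.r mu = Λ.s mu ∧
  ∀ i, Λ.d mu i = 0 → ∀ e, ¬(Λ.r e = Λ.r mu ∧ Λ.d e = Pi.single i 1)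

/-- `x` is (the path function of) `μ^∞` for the initial cycle `μ`. -/
def IsInfIterate (mu : Λ.Path) (x : (Fin k → ℕ) → (Fin k → ℕ) → Λ.Path) : Prop :=
  Λ.IsPathFun (Λ.degInf mu) x ∧ x 0 0 = Λ.r mu ∧
    ∀ n : ℕ, x (n • Λ.d mu) ((n + 1) • Λ.d mu) = mu

/-- Membership in `Λ^{≤ n}`. -/
def LePath (n : Fin k → ℕ) (lam : Λ.Path) : Prop :=
  Λ.d lam ≤ n ∧
    ∀ i, Λ.d lam i < n i → ∀ e, ¬(Λ.r e = Λ.s lam ∧ Λ.d e = Pi.single i 1)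

/-- Minimal common extensions computed inside a subset `S` of `Λ` (all data lying in `S`). -/
def MCEWithin (S : Set Λ.Path) (mu nu : Λ.Path) : Set Λ.Path :=
  {lam | lam ∈ S ∧ Λ.d lam = Λ.d mu ⊔ Λ.d nu ∧
    (∃ α ∈ S, Λ.s mu = Λ.r α ∧ Λ.comp mu α = lam) ∧
    (∃ β ∈ S, Λ.s nu = Λ.r β ∧ Λ.comp nu β = lam)}

/-- Generalised cycles of the sub-`k`-graph determined by a subset `S` of `Λ`. -/
def IsGenCycleWithin (S : Set Λ.Path) (mu nu : Λ.Path) : Prop :=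
  mu ≠ nu ∧ Λ.s mu = Λ.s nu ∧ Λ.r mu = Λ.r nu ∧
    ∀ τ ∈ S, Λ.r τ = Λ.s mu → (Λ.MCEWithin S (Λ.comp mu τ) nu).Nonempty

end KGraph

/-- A Cuntz–Krieger `Λ`-family in a `*`-ring `B`: (CK1) the vertex elements are mutually
orthogonal projections, (CK2) multiplicativity, (CK3) the Cuntz–Krieger relation for
`t_μ* t_ν`, and (CK4) the exhaustivity relation (stated for an arbitrary ordering of the
finite exhaustive set). -/
structure CKFamily {k : ℕ} (Λ : KGraph k) (B : Type*) [NonUnitalRing B] [StarRing B] where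
  t : Λ.Path → B
  selfadjoint : ∀ v, Λ.IsVertex v → star (t v) = t v
  idem : ∀ v, Λ.IsVertex v → t v * t v = t v
  orth : ∀ v w, Λ.IsVertex v → Λ.IsVertex w → v ≠ w → t v * t w = 0
  mul_eq : ∀ mu nu, Λ.s mu = Λ.r nu → t mu * t nu = t (Λ.comp mu nu)
  ck3 : ∀ mu nu, star (t mu) * t nu = ∑ᶠ p ∈ Λ.MCEPairs mu nu, t p.1 * star (t p.2)
  ck4 : ∀ v, Λ.IsVertex v → ∀ (a : Λ.Path) (l : List Λ.Path), (a :: l).Nodup →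
    (∀ lam ∈ a :: l, Λ.r lam = v) → Λ.Exhaustive v {lam | lam ∈ a :: l} →
    (l.map fun lam => t v - t lam * star (t lam)).foldl (· * ·)
      (t v - t a * star (t a)) = 0

/-- A C*-algebra is AF (approximately finite-dimensional) if it contains an increasing
sequence of finite-dimensional `*`-subalgebras whose union is dense. -/
def IsAF (A : Type*) [NonUnitalNormedRing A] [StarRing A] [NormedSpace ℂ A] : Prop :=
  ∃ S : ℕ → NonUnitalStarSubalgebra ℂ A, Monotone S ∧
    (∀ n, FiniteDimensional ℂ (S n)) ∧ Dense (⋃ n, (S n : Set A))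

/-- A closed `*`-subalgebra of `A`, presented as a subset `S`, is AF if it contains an
increasing sequence of finite-dimensional `*`-subalgebras of `A` whose union is dense in `S`. -/
def IsAFIn (A : Type*) [NonUnitalNormedRing A] [StarRing A] [NormedSpace ℂ A]
    (S : Set A) : Prop :=
  ∃ T : ℕ → NonUnitalStarSubalgebra ℂ A, Monotone T ∧ (∀ n, (T n : Set A) ⊆ S) ∧
    (∀ n, FiniteDimensional ℂ (T n)) ∧ ∀ x ∈ S, x ∈ closure (⋃ n, (T n : Set A))

/-!
Choose a cycle `τ` minimising first the number of vertices reachable from `r τ` and then the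
number of colours `i` with `d(τ)ᵢ = 0`. Suppose an edge `a` of such a colour leaves `r τ`. As `a`
is no entrance to `τ`, `a α = τ β` with `β` another such edge at `r τ`; iterating, and using that
there are finitely many vertices, yields a cycle at `s a`. Either `r τ` is reachable from `s a`,
and `τ a ρ` is a cycle using more colours, or fewer vertices are reachable from `s a`: both
contradict minimality, so `r(τ)Λ^{eᵢ} = ∅` whenever `d(τ)ᵢ = 0`.

For this `τ`, a path `μ` from `r τ` with `d μ ≤ M d(τ)` has a common extension with `τ^(M+1)`;
comparing degrees, that extension is `τ^(M+1)` itself, so `μ` is an initial segment of it, and an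
edge of a colour missing from `d τ` at `s μ` would produce one at `r τ`. Hence `τ^∞` lies in
`Λ^{≤∞}`, and every `x ∈ r(τ)Λ^{≤∞}` has the degree of `τ^∞` (the edge continuing `τ^∞` past a
finite coordinate of `d x` would violate the boundary condition) and the same initial segments,
so `x = τ^∞`.
-/

namespace KGraph

variable {k : ℕ} {Λ : KGraph k}

section Factorisation

lemma comp_left_cancel {mu nu nu' : Λ.Path} (h : Λ.s mu = Λ.r nu) (h' : Λ.s mu = Λ.r nu')
    (heq : Λ.comp mu nu = Λ.comp mu nu') : nu = nu' := by
  have hd : Λ.d nu = Λ.d nu' :=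
    add_left_cancel ((Λ.d_comp _ _ h).symm.trans (heq ▸ Λ.d_comp _ _ h'))
  have := (Λ.factor (Λ.comp mu nu) (Λ.d mu) (Λ.d nu) (Λ.d_comp _ _ h)).unique
    (y₁ := (mu, nu)) (y₂ := (mu, nu')) ⟨rfl, rfl, h, rfl⟩ ⟨rfl, hd.symm, h', heq.symm⟩
  exact congrArg Prod.snd this

variable (Λ) in
/-- The factorisation of `lam` at degree `m ⊓ d lam`. -/
noncomputable def fac (lam : Λ.Path) (m : Fin k → ℕ) : Λ.Path × Λ.Path :=
  (Λ.factor lam (m ⊓ Λ.d lam) (Λ.d lam - m)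
    (by funext i; simp only [Pi.add_apply, Pi.sub_apply, Pi.inf_apply]; omega)).exists.choose

variable {lam mu nu : Λ.Path} {m : Fin k → ℕ}

lemma fac_spec (h : m ≤ Λ.d lam) :
    Λ.d (Λ.fac lam m).1 = m ∧ Λ.d (Λ.fac lam m).2 = Λ.d lam - m ∧
      Λ.s (Λ.fac lam m).1 = Λ.r (Λ.fac lam m).2 ∧
      Λ.comp (Λ.fac lam m).1 (Λ.fac lam m).2 = lam := by
  obtain ⟨h₁, h₂⟩ := (Λ.factor lam (m ⊓ Λ.d lam) (Λ.d lam - m)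
    (by funext i; simp only [Pi.add_apply, Pi.sub_apply, Pi.inf_apply]; omega)).exists.choose_spec
  exact ⟨h₁.trans (inf_eq_left.mpr h), h₂⟩

lemma d_fac_fst (h : m ≤ Λ.d lam) : Λ.d (Λ.fac lam m).1 = m := (fac_spec h).1

lemma d_fac_snd (h : m ≤ Λ.d lam) : Λ.d (Λ.fac lam m).2 = Λ.d lam - m := (fac_spec h).2.1

lemma s_fac_fst (h : m ≤ Λ.d lam) : Λ.s (Λ.fac lam m).1 = Λ.r (Λ.fac lam m).2 :=
  (fac_spec h).2.2.1

lemma comp_fac (h : m ≤ Λ.d lam) : Λ.comp (Λ.fac lam m).1 (Λ.fac lam m).2 = lam :=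
  (fac_spec h).2.2.2

lemma fac_eq (hd : Λ.d mu = m) (hs : Λ.s mu = Λ.r nu) (hc : Λ.comp mu nu = lam) :
    Λ.fac lam m = (mu, nu) := by
  have hdl : Λ.d lam = Λ.d mu + Λ.d nu := hc ▸ Λ.d_comp mu nu hs
  have h : m ≤ Λ.d lam := by rw [hdl, ← hd]; exact le_self_add
  have hnu : Λ.d nu = Λ.d lam - m := by rw [hdl, ← hd, add_tsub_cancel_left]
  exact (Λ.factor lam m (Λ.d lam - m) (add_tsub_cancel_of_le h).symm).unique
    (fac_spec h) ⟨hd, hnu, hs, hc⟩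

lemma r_fac_fst (h : m ≤ Λ.d lam) : Λ.r (Λ.fac lam m).1 = Λ.r lam := by
  conv_rhs => rw [← comp_fac h]
  rw [Λ.r_comp _ _ (s_fac_fst h)]

lemma s_fac_snd (h : m ≤ Λ.d lam) : Λ.s (Λ.fac lam m).2 = Λ.s lam := by
  conv_rhs => rw [← comp_fac h]
  rw [Λ.s_comp _ _ (s_fac_fst h)]

lemma fac_zero (lam : Λ.Path) : Λ.fac lam 0 = (Λ.r lam, lam) :=
  fac_eq (Λ.d_r lam) (Λ.s_vertex _ (Λ.d_r lam)) (Λ.id_comp lam)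

lemma fac_d (lam : Λ.Path) : Λ.fac lam (Λ.d lam) = (lam, Λ.s lam) :=
  fac_eq rfl (Λ.r_vertex _ (Λ.d_s lam)).symm (Λ.comp_id lam)

end Factorisation

section Segment

variable (Λ) in
/-- The segment `lam(p, q)`. -/
noncomputable def seg (lam : Λ.Path) (p q : Fin k → ℕ) : Λ.Path :=
  (Λ.fac (Λ.fac lam q).1 p).2

variable {lam : Λ.Path} {p q u : Fin k → ℕ}

lemma seg_zero_left (q : Fin k → ℕ) : Λ.seg lam 0 q = (Λ.fac lam q).1 := by
  rw [seg, fac_zero]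

lemma seg_zero_zero (lam : Λ.Path) : Λ.seg lam 0 0 = Λ.r lam := by
  rw [seg_zero_left, fac_zero]

lemma d_seg (hpq : p ≤ q) (hq : q ≤ Λ.d lam) : Λ.d (Λ.seg lam p q) = q - p := by
  rw [seg, d_fac_snd (by rwa [d_fac_fst hq]), d_fac_fst hq]

lemma seg_self (hp : p ≤ Λ.d lam) : Λ.seg lam p p = Λ.s (Λ.fac lam p).1 := by
  have := fac_d (Λ.fac lam p).1
  rw [d_fac_fst hp] at this
  rw [seg, this]

lemma fac_of_le (hpq : p ≤ q) (hq : q ≤ Λ.d lam) :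
    Λ.fac lam p = ((Λ.fac (Λ.fac lam q).1 p).1, Λ.comp (Λ.seg lam p q) (Λ.fac lam q).2) := by
  have hp : p ≤ Λ.d (Λ.fac lam q).1 := by rwa [d_fac_fst hq]
  have hs : Λ.s (Λ.seg lam p q) = Λ.r (Λ.fac lam q).2 := by
    rw [seg, s_fac_snd hp, s_fac_fst hq]
  exact fac_eq (d_fac_fst hp) (by rw [Λ.r_comp _ _ hs, s_fac_fst hp, seg])
    (by rw [seg, ← Λ.comp_assoc _ _ _ (s_fac_fst hp) hs, comp_fac hp, comp_fac hq])

lemma s_seg (hpq : p ≤ q) (hq : q ≤ Λ.d lam) : Λ.s (Λ.seg lam p q) = Λ.seg lam q q := by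
  rw [seg, s_fac_snd (by rwa [d_fac_fst hq]), seg_self hq]

lemma r_seg (hpq : p ≤ q) (hq : q ≤ Λ.d lam) : Λ.r (Λ.seg lam p q) = Λ.seg lam p p := by
  have hp : p ≤ Λ.d (Λ.fac lam q).1 := by rwa [d_fac_fst hq]
  rw [seg, ← s_fac_fst hp, seg_self (hpq.trans hq), congrArg Prod.fst (fac_of_le hpq hq)]

lemma comp_seg_seg (hpq : p ≤ q) (hqu : q ≤ u) (hu : u ≤ Λ.d lam) :
    Λ.comp (Λ.seg lam p q) (Λ.seg lam q u) = Λ.seg lam p u := by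
  have hq : q ≤ Λ.d (Λ.fac lam u).1 := by rwa [d_fac_fst hu]
  have htrunc : Λ.seg (Λ.fac lam u).1 p q = Λ.seg lam p q := by
    rw [seg, seg, ← congrArg Prod.fst (fac_of_le hqu hu)]
  rw [← htrunc, seg, seg, seg, congrArg Prod.snd (fac_of_le hpq hq), seg]

lemma seg_zero_d (lam : Λ.Path) : Λ.seg lam 0 (Λ.d lam) = lam := by
  rw [seg_zero_left, fac_d]

lemma seg_comp_of_le {mu nu : Λ.Path} (hs : Λ.s mu = Λ.r nu) (hq : q ≤ Λ.d mu) :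
    Λ.seg (Λ.comp mu nu) p q = Λ.seg mu p q := by
  have hs' : Λ.s (Λ.fac mu q).2 = Λ.r nu := by rw [s_fac_snd hq, hs]
  have h := fac_eq (lam := Λ.comp mu nu) (d_fac_fst hq)
    (by rw [Λ.r_comp _ _ hs', s_fac_fst hq])
    (by rw [← Λ.comp_assoc _ _ _ (s_fac_fst hq) hs', comp_fac hq])
  rw [seg, seg, h]

lemma seg_comp_add {mu nu : Λ.Path} (hs : Λ.s mu = Λ.r nu) (hpq : p ≤ q) (hq : q ≤ Λ.d nu) :
    Λ.seg (Λ.comp mu nu) (Λ.d mu + p) (Λ.d mu + q) = Λ.seg nu p q := by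
  set C := (Λ.fac nu q).1
  have hp : p ≤ Λ.d C := by rwa [d_fac_fst hq]
  have hsC : Λ.s mu = Λ.r C := by rw [hs, r_fac_fst hq]
  have hsCp : Λ.s mu = Λ.r (Λ.fac C p).1 := by rw [hsC, r_fac_fst hp]
  have h₁ := fac_eq (lam := Λ.comp mu nu) (m := Λ.d mu + q) (mu := Λ.comp mu C)
    (by rw [Λ.d_comp _ _ hsC, d_fac_fst hq]) (by rw [Λ.s_comp _ _ hsC, s_fac_fst hq])
    (by rw [Λ.comp_assoc _ _ _ hsC (s_fac_fst hq), comp_fac hq])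
  have h₂ := fac_eq (lam := Λ.comp mu C) (m := Λ.d mu + p) (mu := Λ.comp mu (Λ.fac C p).1)
    (by rw [Λ.d_comp _ _ hsCp, d_fac_fst hp]) (by rw [Λ.s_comp _ _ hsCp, s_fac_fst hp])
    (by rw [Λ.comp_assoc _ _ _ hsCp (s_fac_fst hp), comp_fac hp])
  rw [seg, h₁, h₂, seg]

end Segment

section Power

variable (Λ) in
noncomputable def pow (tau : Λ.Path) : ℕ → Λ.Path
  | 0 => Λ.r tau
  | n + 1 => Λ.comp tau (pow tau n)

variable {tau : Λ.Path}

lemma r_pow (hc : Λ.r tau = Λ.s tau) (n : ℕ) : Λ.r (Λ.pow tau n) = Λ.r tau := by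
  induction n with
  | zero => exact Λ.r_vertex _ (Λ.d_r tau)
  | succ n ih => rw [pow, Λ.r_comp _ _ (by rw [ih, hc])]

lemma s_eq_r_pow (hc : Λ.r tau = Λ.s tau) (n : ℕ) : Λ.s tau = Λ.r (Λ.pow tau n) := by
  rw [r_pow hc, hc]

lemma s_pow (hc : Λ.r tau = Λ.s tau) (n : ℕ) : Λ.s (Λ.pow tau n) = Λ.r tau := by
  induction n with
  | zero => exact Λ.s_vertex _ (Λ.d_r tau)
  | succ n ih => rw [pow, Λ.s_comp _ _ (s_eq_r_pow hc n), ih]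

lemma d_pow (hc : Λ.r tau = Λ.s tau) (n : ℕ) : Λ.d (Λ.pow tau n) = n • Λ.d tau := by
  induction n with
  | zero => rw [pow, Λ.d_r, zero_smul]
  | succ n ih => rw [pow, Λ.d_comp _ _ (s_eq_r_pow hc n), ih, succ_nsmul']

lemma pow_add (hc : Λ.r tau = Λ.s tau) (a b : ℕ) :
    Λ.pow tau (a + b) = Λ.comp (Λ.pow tau a) (Λ.pow tau b) := by
  induction a with
  | zero => rw [Nat.zero_add, pow, ← r_pow hc b, Λ.id_comp]
  | succ a ih =>
    rw [Nat.add_right_comm, pow, ih, pow,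
      Λ.comp_assoc _ _ _ (s_eq_r_pow hc a) (by rw [s_pow hc, r_pow hc])]

lemma pow_succ' (hc : Λ.r tau = Λ.s tau) (n : ℕ) :
    Λ.pow tau (n + 1) = Λ.comp (Λ.pow tau n) tau := by
  rw [pow_add hc, pow, pow, hc, Λ.comp_id]

lemma isCycle_pow (hcyc : Λ.IsCycle tau) {n : ℕ} (hn : n ≠ 0) : Λ.IsCycle (Λ.pow tau n) :=
  ⟨by rw [d_pow hcyc.2]; exact smul_ne_zero hn hcyc.1, by rw [r_pow hcyc.2, s_pow hcyc.2]⟩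

lemma seg_pow_eq_seg_pow (hc : Λ.r tau = Λ.s tau) {p q : Fin k → ℕ} {a b : ℕ}
    (ha : q ≤ a • Λ.d tau) (hb : q ≤ b • Λ.d tau) :
    Λ.seg (Λ.pow tau a) p q = Λ.seg (Λ.pow tau b) p q := by
  wlog hab : a ≤ b generalizing a b
  · exact (this hb ha (le_of_not_ge hab)).symm
  obtain ⟨c, rfl⟩ := Nat.exists_eq_add_of_le hab
  rw [pow_add hc, seg_comp_of_le (by rw [s_pow hc, r_pow hc]) (by rwa [d_pow hc])]

end Power

section InitialCycle

lemma add_single_sup_of_le {a b : Fin k → ℕ} {i : Fin k} (c : ℕ) (hab : a ≤ b)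
    (hb : b i = 0) :
    (a + Pi.single i c) ⊔ b = b + Pi.single i c := by
  funext j
  have := hab j
  rcases eq_or_ne j i with rfl | hji
  · simp only [Pi.sup_apply, Pi.add_apply, Pi.single_eq_same, hb] at this ⊢
    omega
  · simp [Pi.single_eq_of_ne hji, this]

lemma exists_isCycle_of_forall_exists_path (hfin : {v : Λ.Path | Λ.IsVertex v}.Finite)
    {S : Set Λ.Path} {n : Fin k → ℕ} (hn : n ≠ 0)
    (hS : ∀ v ∈ S, ∃ α, Λ.r α = v ∧ Λ.s α ∈ S ∧ Λ.d α = n) (hne : S.Nonempty) :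
    ∃ c, Λ.IsCycle c ∧ Λ.r c ∈ S := by
  obtain ⟨v, hv⟩ := hne
  choose! α hα using hS
  set w : ℕ → Λ.Path := fun j => (fun u => Λ.s (α u))^[j] v
  have hw : ∀ j, w j ∈ S := by
    intro j
    induction j with
    | zero => exact hv
    | succ j ih => simpa only [w, Function.iterate_succ_apply'] using (hα _ ih).2.1
  have hvert : ∀ j, Λ.d (w j) = 0 := fun j => (hα _ (hw j)).1 ▸ Λ.d_r _
  have hpath : ∀ i j, ∃ c, Λ.r c = w i ∧ Λ.s c = w (i + j) ∧ Λ.d c = j • n := by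
    intro i j
    induction j with
    | zero => exact ⟨w i, Λ.r_vertex _ (hvert i), Λ.s_vertex _ (hvert i), by simp [hvert]⟩
    | succ j ih =>
      obtain ⟨c, hr, hs, hd⟩ := ih
      have hsc : Λ.s c = Λ.r (α (w (i + j))) := by rw [hs, (hα _ (hw _)).1]
      refine ⟨Λ.comp c (α (w (i + j))), by rw [Λ.r_comp _ _ hsc, hr], ?_, ?_⟩
      · rw [Λ.s_comp _ _ hsc, ← add_assoc]
        simp only [w, Function.iterate_succ_apply']
      · rw [Λ.d_comp _ _ hsc, hd, (hα _ (hw _)).2.2, succ_nsmul]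
  obtain ⟨i, i', hii', heq⟩ := hfin.exists_lt_map_eq_of_forall_mem (f := w) hvert
  obtain ⟨c, hr, hs, hd⟩ := hpath i (i' - i)
  refine ⟨c, ⟨?_, ?_⟩, hr ▸ hw i⟩
  · rw [hd]
    exact smul_ne_zero (by omega) hn
  · rw [hr, hs, Nat.add_sub_cancel' hii'.le, heq]

lemma exists_isCycle_at_edge (hfin : {v : Λ.Path | Λ.IsVertex v}.Finite)
    (hnoent : Λ.NoCycleHasEntrance) {lam : Λ.Path} (hcyc : Λ.IsCycle lam) {i : Fin k}
    (hi : Λ.d lam i = 0) {e : Λ.Path} (he : Λ.r e = Λ.r lam ∧ Λ.d e = Pi.single i 1) :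
    ∃ a c, Λ.r a = Λ.r lam ∧ Λ.d a = Pi.single i 1 ∧ Λ.IsCycle c ∧ Λ.r c = Λ.s a := by
  set S := {v | ∃ a, Λ.r a = Λ.r lam ∧ Λ.d a = Pi.single i 1 ∧ Λ.s a = v}
  suffices h : ∃ c, Λ.IsCycle c ∧ Λ.r c ∈ S by
    obtain ⟨c, hc, a, hra, hda, hsa⟩ := h
    exact ⟨a, c, hra, hda, hc, hsa.symm⟩
  refine exists_isCycle_of_forall_exists_path hfin hcyc.1 ?_ ⟨_, e, he.1, he.2, rfl⟩
  rintro _ ⟨a, hra, hda, rfl⟩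
  -- `a` is no entrance to `lam`: `a α = lam β` with `β` again an `eᵢ`-edge at `r lam`
  obtain ⟨μ, hdμ, ⟨α, hsα, rfl⟩, β, hsβ, hcβ⟩ := hnoent lam hcyc a hra
  have hdμ' : Λ.d (Λ.comp a α) = Λ.d lam + Pi.single i 1 := by
    have := add_single_sup_of_le (a := 0) 1 (fun j => Nat.zero_le (Λ.d lam j)) hi
    rw [zero_add] at this
    rw [hdμ, hda, this]
  have hdβ : Λ.d β = Pi.single i 1 :=
    add_left_cancel ((Λ.d_comp _ _ hsβ).symm.trans (hcβ ▸ hdμ'))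
  have hdα : Λ.d α = Λ.d lam := by
    have h := (Λ.d_comp _ _ hsα).symm.trans hdμ'
    rw [hda, add_comm] at h
    exact add_right_cancel h
  refine ⟨α, hsα.symm, ⟨β, by rw [← hsβ, hcyc.2], hdβ, ?_⟩, hdα⟩
  rw [← Λ.s_comp _ _ hsβ, hcβ, Λ.s_comp _ _ hsα]

variable (Λ) in
def reachable (v : Λ.Path) : Set Λ.Path := {u | ∃ p, Λ.r p = v ∧ Λ.s p = u}

lemma reachable_finite (hfin : {v : Λ.Path | Λ.IsVertex v}.Finite) (v : Λ.Path) :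
    (Λ.reachable v).Finite :=
  hfin.subset fun _ ⟨p, _, hs⟩ => hs ▸ Λ.d_s p

lemma reachable_s_ssubset {a : Λ.Path} (hv : Λ.r a ∉ Λ.reachable (Λ.s a)) :
    Λ.reachable (Λ.s a) ⊂ Λ.reachable (Λ.r a) := by
  refine ⟨fun u ⟨ρ, hρr, hρs⟩ => ⟨Λ.comp a ρ, ?_, ?_⟩, fun h => hv (h ?_)⟩
  · rw [Λ.r_comp _ _ hρr.symm]
  · rw [Λ.s_comp _ _ hρr.symm, hρs]
  · exact ⟨Λ.r a, Λ.r_vertex _ (Λ.d_r a), Λ.s_vertex _ (Λ.d_r a)⟩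

lemma exists_isCycle_zeros_ssubset {lam a ρ : Λ.Path} (hcyc : Λ.IsCycle lam) {i : Fin k}
    (hi : Λ.d lam i = 0) (ha : Λ.r a = Λ.r lam) (hda : Λ.d a = Pi.single i 1)
    (hρ : Λ.r ρ = Λ.s a) (hρs : Λ.s ρ = Λ.r lam) :
    ∃ lam', Λ.IsCycle lam' ∧ Λ.r lam' = Λ.r lam ∧
      {j | Λ.d lam' j = 0}.toFinset ⊂ {j | Λ.d lam j = 0}.toFinset := by
  have haρ : Λ.s a = Λ.r ρ := hρ.symm
  have hlam : Λ.s lam = Λ.r (Λ.comp a ρ) := by rw [Λ.r_comp _ _ haρ, ha, hcyc.2]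
  have hd : Λ.d (Λ.comp lam (Λ.comp a ρ)) = Λ.d lam + (Pi.single i 1 + Λ.d ρ) := by
    rw [Λ.d_comp _ _ hlam, Λ.d_comp _ _ haρ, hda]
  have hdi : Λ.d (Λ.comp lam (Λ.comp a ρ)) i ≠ 0 := by simp [hd]
  refine ⟨Λ.comp lam (Λ.comp a ρ), ⟨fun h => hdi (by simp [h]), ?_⟩, Λ.r_comp _ _ hlam, ?_⟩
  · rw [Λ.r_comp _ _ hlam, Λ.s_comp _ _ hlam, Λ.s_comp _ _ haρ, hρs, hcyc.2]
  · refine Finset.ssubset_iff_of_subset ?_ |>.mpr ⟨i, by simpa using hi, by simpa using hdi⟩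
    intro j
    simp only [Set.mem_toFinset, Set.mem_ofPred_eq, hd, Pi.add_apply]
    omega

lemma exists_isInitialCycle (hfin : {v : Λ.Path | Λ.IsVertex v}.Finite)
    (hnoent : Λ.NoCycleHasEntrance) (hcyc : ∃ lam, Λ.IsCycle lam) :
    ∃ τ, Λ.IsCycle τ ∧ Λ.IsInitialCycle τ := by
  -- lexicographic in (reachable vertices, unused colours), since at most `k` colours are unused
  let w : Λ.Path → ℕ := fun lam =>
    (Λ.reachable (Λ.r lam)).ncard * (k + 1) + {j | Λ.d lam j = 0}.toFinset.card
  have hwk : ∀ lam, {j | Λ.d lam j = 0}.toFinset.card ≤ k := fun lam =>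
    (Finset.card_le_univ _).trans (Fintype.card_fin k).le
  obtain ⟨τ, hτ, hmin⟩ := (measure w).wf.has_min {lam | Λ.IsCycle lam} hcyc
  refine ⟨τ, hτ, hτ.2, fun i hi e he => ?_⟩
  obtain ⟨a, c, hra, hda, hc, hrc⟩ := exists_isCycle_at_edge hfin hnoent hτ hi he
  by_cases hback : Λ.r τ ∈ Λ.reachable (Λ.s a)
  · obtain ⟨ρ, hρ, hρs⟩ := hback
    obtain ⟨lam', hcyc', hr', hzeros⟩ := exists_isCycle_zeros_ssubset hτ hi hra hda hρ hρs
    refine hmin lam' hcyc' (show w lam' < w τ from ?_)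
    have := Finset.card_lt_card hzeros
    simp only [w, hr']
    omega
  · have hlt := Set.ncard_lt_ncard (hra ▸ reachable_s_ssubset (hra ▸ hback))
      (reachable_finite hfin _)
    refine hmin c hc (show w c < w τ from ?_)
    have := hwk c
    simp only [w, hrc]
    nlinarith

end InitialCycle

section InfiniteIterate

lemma le_sum_nsmul {q n : Fin k → ℕ} (h : ∀ i, n i = 0 → q i = 0) : q ≤ (∑ j, q j) • n := by
  intro i
  simp only [Pi.smul_apply, smul_eq_mul]
  by_cases hi : n i = 0
  · simp [h i hi]
  · exact (Finset.single_le_sum (fun j _ => Nat.zero_le (q j)) (Finset.mem_univ i)).trans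
      (Nat.le_mul_of_pos_right _ (Nat.pos_of_ne_zero hi))

lemma le_sum_nsmul_of_le_nsmul {q n : Fin k → ℕ} {M : ℕ} (h : q ≤ M • n) :
    q ≤ (∑ j, q j) • n :=
  le_sum_nsmul fun i hi => by simpa [hi] using h i

variable {tau : Λ.Path} {p q : Fin k → ℕ}

lemma degInf_of_eq_zero {i : Fin k} (hi : Λ.d tau i = 0) : Λ.degInf tau i = 0 := if_pos hi

lemma degInf_of_ne_zero {i : Fin k} (hi : Λ.d tau i ≠ 0) : Λ.degInf tau i = ⊤ := if_neg hi

lemma le_nsmul_of_le_degInf (hq : ∀ i, (q i : ℕ∞) ≤ Λ.degInf tau i) :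
    q ≤ (∑ j, q j) • Λ.d tau := by
  refine le_sum_nsmul fun i hi => ?_
  have := hq i
  rwa [degInf_of_eq_zero hi, nonpos_iff_eq_zero, Nat.cast_eq_zero] at this

lemma le_degInf_of_le_nsmul {M : ℕ} (hq : q ≤ M • Λ.d tau) (i : Fin k) :
    (q i : ℕ∞) ≤ Λ.degInf tau i := by
  by_cases hi : Λ.d tau i = 0
  · have : q i = 0 := by simpa [hi] using hq i
    simp [this]
  · simp [degInf_of_ne_zero hi]

variable (Λ) in
/-- `tau^∞` as a path function: its segment `(p, q)` is read off `tau ^ (∑ j, q j)`, which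
contains it whenever `q` vanishes off the support of `d tau`. -/
noncomputable def infIter (tau : Λ.Path) (p q : Fin k → ℕ) : Λ.Path :=
  Λ.seg (Λ.pow tau (∑ j, q j)) p q

lemma infIter_eq_seg_pow (hc : Λ.r tau = Λ.s tau) {M : ℕ} (hq : q ≤ M • Λ.d tau) :
    Λ.infIter tau p q = Λ.seg (Λ.pow tau M) p q :=
  seg_pow_eq_seg_pow hc (le_sum_nsmul_of_le_nsmul hq) hq

lemma isPathFun_infIter (hc : Λ.r tau = Λ.s tau) :
    Λ.IsPathFun (Λ.degInf tau) (Λ.infIter tau) := by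
  refine ⟨fun p q hpq hq => ?_, fun p q hpq hq => ?_, fun p q u hpq hqu hu => ?_⟩
  · exact d_seg hpq (by rw [d_pow hc]; exact le_nsmul_of_le_degInf hq)
  · have hqM := le_nsmul_of_le_degInf hq
    refine ⟨?_, s_seg hpq (by rwa [d_pow hc])⟩
    rw [infIter, r_seg hpq (by rwa [d_pow hc]), infIter_eq_seg_pow hc (hpq.trans hqM)]
  · have huM := le_nsmul_of_le_degInf hu
    rw [infIter_eq_seg_pow (p := p) hc (hqu.trans huM), infIter_eq_seg_pow (p := q) hc huM,
      infIter, comp_seg_seg hpq hqu (by rwa [d_pow hc])]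

lemma infIter_zero_zero (hc : Λ.r tau = Λ.s tau) : Λ.infIter tau 0 0 = Λ.r tau := by
  rw [infIter, seg_zero_zero, r_pow hc]

lemma infIter_nsmul (hc : Λ.r tau = Λ.s tau) (n : ℕ) :
    Λ.infIter tau (n • Λ.d tau) ((n + 1) • Λ.d tau) = tau := by
  have h₀ : n • Λ.d tau = Λ.d (Λ.pow tau n) + 0 := by rw [add_zero, d_pow hc]
  have h₁ : (n + 1) • Λ.d tau = Λ.d (Λ.pow tau n) + Λ.d tau := by rw [d_pow hc, succ_nsmul]
  rw [infIter_eq_seg_pow hc le_rfl, pow_succ' hc, h₀, h₁,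
    seg_comp_add (by rw [s_pow hc]) (zero_le : (0 : Fin k → ℕ) ≤ _) le_rfl, seg_zero_d]

lemma isInfIterate_infIter (hc : Λ.r tau = Λ.s tau) : Λ.IsInfIterate tau (Λ.infIter tau) :=
  ⟨isPathFun_infIter hc, infIter_zero_zero hc, infIter_nsmul hc⟩

lemma infIter_d_add (hc : Λ.r tau = Λ.s tau) {M : ℕ} (hpq : p ≤ q) (hq : q ≤ M • Λ.d tau) :
    Λ.infIter tau (Λ.d tau + p) (Λ.d tau + q) = Λ.infIter tau p q := by
  have hq' : Λ.d tau + q ≤ (M + 1) • Λ.d tau := by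
    rw [succ_nsmul']
    exact add_le_add le_rfl hq
  rw [infIter_eq_seg_pow hc hq', infIter_eq_seg_pow hc hq, pow,
    seg_comp_add (s_eq_r_pow hc M) hpq (by rwa [d_pow hc])]

end InfiniteIterate

section PathFun

variable {m : Fin k → ℕ∞} {x y : (Fin k → ℕ) → (Fin k → ℕ) → Λ.Path} {p q : Fin k → ℕ}

lemma IsPathFun.zero_left (hx : Λ.IsPathFun m x) (hq : ∀ i, (q i : ℕ∞) ≤ m i) :
    Λ.d (x 0 q) = q ∧ Λ.r (x 0 q) = x 0 0 ∧ Λ.s (x 0 q) = x q q :=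
  ⟨by rw [hx.1 0 q zero_le hq, tsub_zero], hx.2.1 0 q zero_le hq⟩

lemma IsPathFun.eq_of_zero_left (hx : Λ.IsPathFun m x) (hy : Λ.IsPathFun m y)
    (h : ∀ q : Fin k → ℕ, (∀ i, (q i : ℕ∞) ≤ m i) → x 0 q = y 0 q) (hpq : p ≤ q)
    (hq : ∀ i, (q i : ℕ∞) ≤ m i) : x p q = y p q := by
  have hp : ∀ i, (p i : ℕ∞) ≤ m i := fun i => (Nat.cast_le.mpr (hpq i)).trans (hq i)
  refine comp_left_cancel (mu := x 0 p) ?_ ?_ ?_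
  · rw [(hx.2.1 0 p zero_le hp).2, (hx.2.1 p q hpq hq).1]
  · rw [h p hp, (hy.2.1 0 p zero_le hp).2, (hy.2.1 p q hpq hq).1]
  · rw [hx.2.2 0 p q zero_le hpq hq]
    nth_rw 1 [h p hp]
    rw [hy.2.2 0 p q zero_le hpq hq, h q hq]

end PathFun

section Uniqueness

variable {tau : Λ.Path}

lemma exists_comp_eq_pow_comp (hcyc : Λ.IsCycle tau) (hnoent : Λ.NoCycleHasEntrance)
    {mu : Λ.Path} (hmu : Λ.r mu = Λ.r tau) {M : ℕ} (hM : M ≠ 0) :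
    ∃ α β, Λ.s mu = Λ.r α ∧ Λ.r β = Λ.r tau ∧ Λ.comp mu α = Λ.comp (Λ.pow tau M) β ∧
      M • Λ.d tau + Λ.d β = Λ.d mu ⊔ M • Λ.d tau := by
  obtain ⟨ν, hdν, ⟨α, hsα, rfl⟩, β, hsβ, hcβ⟩ :=
    hnoent _ (isCycle_pow hcyc hM) mu (by rw [hmu, r_pow hcyc.2])
  refine ⟨α, β, hsα, by rw [← hsβ, s_pow hcyc.2], hcβ.symm, ?_⟩
  rw [← d_pow hcyc.2, ← Λ.d_comp _ _ hsβ, hcβ, hdν]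

lemma infIter_zero_d (hcyc : Λ.IsCycle tau) (hnoent : Λ.NoCycleHasEntrance)
    {mu : Λ.Path} (hmu : Λ.r mu = Λ.r tau) {M : ℕ} (hM : Λ.d mu ≤ M • Λ.d tau) :
    Λ.infIter tau 0 (Λ.d mu) = mu := by
  have hM' : Λ.d mu ≤ (M + 1) • Λ.d tau :=
    hM.trans (nsmul_le_nsmul_left zero_le M.le_succ)
  obtain ⟨α, β, hsα, hrβ, hcomp, hd⟩ := exists_comp_eq_pow_comp hcyc hnoent hmu M.succ_ne_zero
  have hβ : Λ.d β = 0 := by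
    rw [sup_eq_right.mpr hM'] at hd
    exact add_eq_left.mp hd
  have hβ' : β = Λ.s (Λ.pow tau (M + 1)) := by
    rw [s_pow hcyc.2, ← hrβ, Λ.r_vertex _ hβ]
  rw [hβ', Λ.comp_id] at hcomp
  rw [infIter_eq_seg_pow hcyc.2 hM', seg_zero_left, fac_eq rfl hsα hcomp]

lemma not_edge_of_isInitialCycle (hcyc : Λ.IsCycle tau) (hinit : Λ.IsInitialCycle tau)
    (hnoent : Λ.NoCycleHasEntrance) {rho : Λ.Path} (hrho : Λ.r rho = Λ.r tau) {M : ℕ}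
    (hM : Λ.d rho ≤ M • Λ.d tau) {i : Fin k} (hi : Λ.d tau i = 0) (e : Λ.Path) :
    ¬(Λ.r e = Λ.s rho ∧ Λ.d e = Pi.single i 1) := by
  rintro ⟨hre, hde⟩
  have hse : Λ.s rho = Λ.r e := hre.symm
  obtain ⟨α, β, -, hrβ, -, hd⟩ := exists_comp_eq_pow_comp hcyc hnoent
    (by rw [Λ.r_comp _ _ hse, hrho]) (Nat.succ_ne_zero M)
  rw [Λ.d_comp _ _ hse, hde, add_single_sup_of_le 1
    (hM.trans (nsmul_le_nsmul_left zero_le M.le_succ)) (by simp [hi])] at hd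
  exact hinit.2 i hi β ⟨hrβ, add_left_cancel hd⟩

lemma isLeInftyPath_infIter (hcyc : Λ.IsCycle tau) (hinit : Λ.IsInitialCycle tau)
    (hnoent : Λ.NoCycleHasEntrance) : Λ.IsLeInftyPath (Λ.degInf tau) (Λ.infIter tau) := by
  refine ⟨isPathFun_infIter hcyc.2, fun n hn i hni e => ?_⟩
  have hi : Λ.d tau i = 0 := by
    by_contra hi
    rw [degInf_of_ne_zero hi] at hni
    exact ENat.natCast_ne_top _ hni
  obtain ⟨hd, hr, hs⟩ := (isPathFun_infIter hcyc.2).zero_left hn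
  rw [← hs]
  exact not_edge_of_isInitialCycle hcyc hinit hnoent (hr.trans (infIter_zero_zero hcyc.2))
    (hd ▸ le_nsmul_of_le_degInf hn) hi e

variable {m : Fin k → ℕ∞} {x : (Fin k → ℕ) → (Fin k → ℕ) → Λ.Path}

lemma eq_infIter (hcyc : Λ.IsCycle tau) (hnoent : Λ.NoCycleHasEntrance)
    (hx : Λ.IsPathFun (Λ.degInf tau) x) (h00 : x 0 0 = Λ.r tau) {p q : Fin k → ℕ}
    (hpq : p ≤ q) (hq : ∀ i, (q i : ℕ∞) ≤ Λ.degInf tau i) : x p q = Λ.infIter tau p q := by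
  refine hx.eq_of_zero_left (isPathFun_infIter hcyc.2) (fun q hq => ?_) hpq hq
  obtain ⟨hd, hr, -⟩ := hx.zero_left hq
  conv_rhs => rw [← hd]
  exact (infIter_zero_d hcyc hnoent (hr.trans h00) (hd ▸ le_nsmul_of_le_degInf hq)).symm

lemma eq_zero_of_isInitialCycle (hinit : Λ.IsInitialCycle tau) (hx : Λ.IsPathFun m x)
    (h00 : x 0 0 = Λ.r tau) {i : Fin k} (hi : Λ.d tau i = 0) : m i = 0 := by
  by_contra hmi
  have hle : ∀ j, ((Pi.single i 1 : Fin k → ℕ) j : ℕ∞) ≤ m j := by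
    intro j
    rcases eq_or_ne j i with rfl | hji
    · simpa using Order.one_le_iff_ne_zero.mpr hmi
    · simp [Pi.single_eq_of_ne hji]
  obtain ⟨hd, hr, -⟩ := hx.zero_left hle
  exact hinit.2 i hi _ ⟨hr.trans h00, hd⟩

lemma eq_top_of_isLeInftyPath (hcyc : Λ.IsCycle tau) (hnoent : Λ.NoCycleHasEntrance)
    (hx : Λ.IsLeInftyPath m x) (h00 : x 0 0 = Λ.r tau) {i : Fin k} (hi : Λ.d tau i ≠ 0) :
    m i = ⊤ := by
  by_contra hmi
  obtain ⟨c, hc⟩ := ENat.ne_top_iff_exists.mp hmi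
  set n : Fin k → ℕ := Pi.single i c
  have hn : ∀ j, (n j : ℕ∞) ≤ m j := by
    intro j
    rcases eq_or_ne j i with rfl | hji
    · rw [← hc]
      simp [n]
    · simp [n, Pi.single_eq_of_ne hji]
  -- `x` runs along `tau^∞` up to `n`, where `tau^∞` continues with an edge of degree `eᵢ`
  have hnτ : n ≤ c • Λ.d tau := by
    intro j
    rcases eq_or_ne j i with rfl | hji
    · simpa [n] using Nat.le_mul_of_pos_right c (Nat.pos_of_ne_zero hi)
    · simp [n, Pi.single_eq_of_ne hji]
  have hnext : ∀ j, ((n + Pi.single i 1 : Fin k → ℕ) j : ℕ∞) ≤ Λ.degInf tau j := by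
    intro j
    rcases eq_or_ne j i with rfl | hji
    · simp [degInf_of_ne_zero hi]
    · simp [n, Pi.single_eq_of_ne hji]
  obtain ⟨hd, hr, hs⟩ := hx.1.zero_left hn
  have hpath := isPathFun_infIter hcyc.2
  have hn' : ∀ j, (n j : ℕ∞) ≤ Λ.degInf tau j :=
    fun j => (Nat.cast_le.mpr (le_self_add (a := n j))).trans (hnext j)
  have hμ : Λ.infIter tau 0 n = x 0 n := by
    conv_lhs => rw [← hd]
    exact infIter_zero_d hcyc hnoent (hr.trans h00) (hd ▸ hnτ)
  refine hx.2 n hn i (by simp [n, hc]) (Λ.infIter tau n (n + Pi.single i 1)) ⟨?_, ?_⟩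
  · rw [(hpath.2.1 _ _ le_self_add hnext).1, ← (hpath.zero_left hn').2.2, hμ, hs]
  · rw [hpath.1 _ _ le_self_add hnext, add_tsub_cancel_left]

lemma eq_degInf_of_isLeInftyPath (hcyc : Λ.IsCycle tau) (hinit : Λ.IsInitialCycle tau)
    (hnoent : Λ.NoCycleHasEntrance) (hx : Λ.IsLeInftyPath m x) (h00 : x 0 0 = Λ.r tau) :
    m = Λ.degInf tau := by
  funext i
  by_cases hi : Λ.d tau i = 0
  · rw [degInf_of_eq_zero hi, eq_zero_of_isInitialCycle hinit hx.1 h00 hi]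
  · rw [degInf_of_ne_zero hi, eq_top_of_isLeInftyPath hcyc hnoent hx h00 hi]

end Uniqueness

end KGraph

theorem stmt14_general {k : ℕ} (Λ : KGraph k)
    (hfin : {v : Λ.Path | Λ.IsVertex v}.Finite)
    (hcyc : ∃ lam, Λ.IsCycle lam) (hnoent : Λ.NoCycleHasEntrance) :
    ∃ τ : Λ.Path, Λ.IsCycle τ ∧
      (∀ i, Λ.d τ i = 0 → ∀ e, ¬(Λ.r e = Λ.r τ ∧ Λ.d e = Pi.single i 1)) ∧
      -- `τ^∞ ∈ r(τ)Λ^{≤∞}`, so `r(τ)Λ^{≤∞}` is nonempty …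
      (∃ x : (Fin k → ℕ) → (Fin k → ℕ) → Λ.Path,
        Λ.IsLeInftyPath (Λ.degInf τ) x ∧ x 0 0 = Λ.r τ ∧
        ∀ n : ℕ, x (n • Λ.d τ) ((n + 1) • Λ.d τ) = τ) ∧
      -- … and every element of `r(τ)Λ^{≤∞}` equals `τ^∞`; in particular `σ^{d τ} x = x`.
      ∀ (m : Fin k → ℕ∞) (x : (Fin k → ℕ) → (Fin k → ℕ) → Λ.Path),
        Λ.IsLeInftyPath m x → x 0 0 = Λ.r τ →
        m = Λ.degInf τ ∧
        (∀ n : ℕ, x (n • Λ.d τ) ((n + 1) • Λ.d τ) = τ) ∧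
        ∀ p q : Fin k → ℕ, p ≤ q → (∀ i, ((Λ.d τ i + q i : ℕ) : ℕ∞) ≤ m i) →
          x (Λ.d τ + p) (Λ.d τ + q) = x p q := by
  open KGraph in
  obtain ⟨τ, hτ, hinit⟩ := exists_isInitialCycle hfin hnoent hcyc
  have hiter := isInfIterate_infIter hτ.2
  refine ⟨τ, hτ, hinit.2, ⟨_, isLeInftyPath_infIter hτ hinit hnoent, hiter.2⟩, ?_⟩
  intro m x hx h00
  obtain rfl := eq_degInf_of_isLeInftyPath hτ hinit hnoent hx h00
  have hxeq := fun p q (hpq : p ≤ q) hq => eq_infIter hτ hnoent hx.1 h00 hpq hq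
  refine ⟨rfl, fun n => ?_, fun p q hpq hq => ?_⟩
  · rw [hxeq _ _ (nsmul_le_nsmul_left zero_le n.le_succ) (le_degInf_of_le_nsmul le_rfl),
      hiter.2.2]
  · have hq' : ∀ i, (q i : ℕ∞) ≤ Λ.degInf τ i :=
      fun i => (Nat.cast_le.mpr (Nat.le_add_left _ _)).trans (hq i)
    rw [hxeq _ _ (add_le_add le_rfl hpq) hq, hxeq _ _ hpq hq',
      infIter_d_add hτ.2 hpq (le_nsmul_of_le_degInf hq')]

/-- key step of Corollary 5.7. If `Λ` is row-finite, locally convex, has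
finitely many vertices, contains a cycle, and no cycle of `Λ` has an entrance, then there is
a cycle `τ` with `r(τ)Λ^{eᵢ} = ∅` whenever `d(τ)ᵢ = 0` and with `r(τ)Λ^{≤∞} = {τ^∞}`; in
particular `σ^{d τ} x = x` for every `x ∈ r(τ)Λ^{≤∞}`. -/
theorem stmt14 {k : ℕ} (Λ : KGraph k) (hRF : Λ.RowFinite) (hLC : Λ.LocallyConvex)
    (hfin : {v : Λ.Path | Λ.IsVertex v}.Finite)
    (hcyc : ∃ lam, Λ.IsCycle lam) (hnoent : Λ.NoCycleHasEntrance) :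
    ∃ τ : Λ.Path, Λ.IsCycle τ ∧
      (∀ i, Λ.d τ i = 0 → ∀ e, ¬(Λ.r e = Λ.r τ ∧ Λ.d e = Pi.single i 1)) ∧
      -- `τ^∞ ∈ r(τ)Λ^{≤∞}`, so `r(τ)Λ^{≤∞}` is nonempty …
      (∃ x : (Fin k → ℕ) → (Fin k → ℕ) → Λ.Path,
        Λ.IsLeInftyPath (Λ.degInf τ) x ∧ x 0 0 = Λ.r τ ∧
        ∀ n : ℕ, x (n • Λ.d τ) ((n + 1) • Λ.d τ) = τ) ∧
      -- … and every element of `r(τ)Λ^{≤∞}` equals `τ^∞`; in particular `σ^{d τ} x = x`.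
      ∀ (m : Fin k → ℕ∞) (x : (Fin k → ℕ) → (Fin k → ℕ) → Λ.Path),
        Λ.IsLeInftyPath m x → x 0 0 = Λ.r τ →
        m = Λ.degInf τ ∧
        (∀ n : ℕ, x (n • Λ.d τ) ((n + 1) • Λ.d τ) = τ) ∧
        ∀ p q : Fin k → ℕ, p ≤ q → (∀ i, ((Λ.d τ i + q i : ℕ) : ℕ∞) ≤ m i) →
          x (Λ.d τ + p) (Λ.d τ + q) = x p q :=
  stmt14_general Λ hfin hcyc hnoent
end

section
/- Let Λ be a row-finite locally convex k-graph such that Λ⁰ is finite and no cycle in Λ has an entrance. Let μ be an initial cycle of Λ. Then G_μ := {m − n : m, n ∈ ℕ^k, m ≤ d(μ^∞), n ≤ d(μ^∞), μ^∞(m) = μ^∞(n)} is a subgroup of ℤ^k. -/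
/-! Along `μ^∞` the only paths leaving a vertex in the directions of `d(μ)` are the segments of
`μ^∞` itself: a path `λ` with `r(λ) = r(μ)` has degree at most that of some power `μ^N`, which
is a cycle, and since that cycle has no entrance, `λ` is an initial segment of `μ^N`. Hence
`μ^∞(p) = μ^∞(q)` forces `μ^∞(p + t) = μ^∞(q + t)` for every admissible `t`, which makes the set
of differences `p - q` closed under addition. -/

open scoped ComplexOrder ENat

open Function

theorem Function.support_add_subset_of {α M : Type*} [AddZeroClass M] {f g : α → M} {s : Set α}
    (hf : support f ⊆ s) (hg : support g ⊆ s) : support (f + g) ⊆ s :=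
  (support_add f g).trans (Set.union_subset hf hg)

theorem Pi.exists_le_nsmul_of_support_subset {ι : Type*} [Fintype ι] {p d : ι → ℕ}
    (h : support p ⊆ support d) : ∃ M : ℕ, p ≤ M • d := by
  refine ⟨Finset.univ.sup p, fun i => ?_⟩
  by_cases hi : d i = 0
  · simp [support_subset_iff'.mp h i (notMem_support.mpr hi)]
  · calc p i ≤ Finset.univ.sup p := Finset.le_sup (Finset.mem_univ i)
      _ ≤ Finset.univ.sup p * d i := Nat.le_mul_of_pos_right _ (Nat.pos_of_ne_zero hi)

namespace KGraph

variable {k : ℕ} {Λ : KGraph k}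

theorem eq_of_comp_eq_comp {a b a' b' : Λ.Path} (hab : Λ.s a = Λ.r b) (hab' : Λ.s a' = Λ.r b')
    (hd : Λ.d a = Λ.d a') (h : Λ.comp a b = Λ.comp a' b') : a = a' ∧ b = b' := by
  have hdb : Λ.d b = Λ.d b' := by
    have := Λ.d_comp a b hab
    rw [h, Λ.d_comp a' b' hab', hd] at this
    exact (add_left_cancel this).symm
  obtain ⟨_, -, huniq⟩ := Λ.factor (Λ.comp a b) (Λ.d a) (Λ.d b) (Λ.d_comp a b hab)
  exact Prod.ext_iff.mp ((huniq (a, b) ⟨rfl, rfl, hab, rfl⟩).trans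
    (huniq (a', b') ⟨hd.symm, hdb.symm, hab', h.symm⟩).symm)

theorem NoCycleHasEntrance.exists_comp_eq (hnoent : Λ.NoCycleHasEntrance) {c lam : Λ.Path}
    (hc : Λ.IsCycle c) (hr : Λ.r lam = Λ.r c) (hd : Λ.d lam ≤ Λ.d c) :
    ∃ α, Λ.s lam = Λ.r α ∧ Λ.comp lam α = c := by
  obtain ⟨_, hzd, ⟨α, hα, rfl⟩, β, hβ, hcβ⟩ := hnoent c hc lam hr
  have hβ0 : Λ.d β = 0 := by
    have := Λ.d_comp c β hβ
    rw [hcβ, hzd, sup_eq_right.mpr hd] at this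
    exact add_eq_left.mp this.symm
  have hβs : β = Λ.s c := (Λ.r_vertex β hβ0).symm.trans hβ.symm
  exact ⟨α, hα, by rw [← hcβ, hβs, Λ.comp_id]⟩

theorem coe_le_degInf_iff {τ : Λ.Path} {p : Fin k → ℕ} :
    (∀ i, (p i : ℕ∞) ≤ Λ.degInf τ i) ↔ support p ⊆ support (Λ.d τ) := by
  simp only [degInf, support_subset_iff, ne_eq]
  refine forall_congr' fun i => ?_
  split_ifs with h <;> simp [h]

namespace IsInfIterate

variable {mu : Λ.Path} {x : (Fin k → ℕ) → (Fin k → ℕ) → Λ.Path} {p q u : Fin k → ℕ}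

theorem d_apply (hx : Λ.IsInfIterate mu x) (hpq : p ≤ q) (hq : support q ⊆ support (Λ.d mu)) :
    Λ.d (x p q) = q - p :=
  hx.1.1 p q hpq (coe_le_degInf_iff.mpr hq)

theorem r_apply (hx : Λ.IsInfIterate mu x) (hpq : p ≤ q) (hq : support q ⊆ support (Λ.d mu)) :
    Λ.r (x p q) = x p p :=
  (hx.1.2.1 p q hpq (coe_le_degInf_iff.mpr hq)).1

theorem s_apply (hx : Λ.IsInfIterate mu x) (hpq : p ≤ q) (hq : support q ⊆ support (Λ.d mu)) :
    Λ.s (x p q) = x q q :=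
  (hx.1.2.1 p q hpq (coe_le_degInf_iff.mpr hq)).2

theorem comp_apply (hx : Λ.IsInfIterate mu x) (hpq : p ≤ q) (hqu : q ≤ u)
    (hu : support u ⊆ support (Λ.d mu)) : Λ.comp (x p q) (x q u) = x p u :=
  hx.1.2.2 p q u hpq hqu (coe_le_degInf_iff.mpr hu)

theorem vertex_nsmul (hx : Λ.IsInfIterate mu x) (N : ℕ) :
    x (N • Λ.d mu) (N • Λ.d mu) = Λ.r mu := by
  have h := hx.r_apply (nsmul_le_nsmul_left zero_le N.le_succ)
    (support_const_smul_subset (N + 1) _)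
  rwa [hx.2.2 N, eq_comm] at h

theorem eq_segment_of_r_eq (hnoent : Λ.NoCycleHasEntrance) (hx : Λ.IsInfIterate mu x)
    {lam : Λ.Path} (hr : Λ.r lam = Λ.r mu) (hd : support (Λ.d lam) ⊆ support (Λ.d mu)) :
    lam = x 0 (Λ.d lam) := by
  by_cases hmu : Λ.d mu = 0
  · have hlam : Λ.d lam = 0 := by simpa [hmu] using hd
    rw [hlam, ← Λ.r_vertex lam hlam, hr, hx.2.1]
  obtain ⟨M, hM⟩ := Pi.exists_le_nsmul_of_support_subset hd
  have hN : support ((M + 1) • Λ.d mu) ⊆ support (Λ.d mu) := support_const_smul_subset _ _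
  have hcd : Λ.d (x 0 ((M + 1) • Λ.d mu)) = (M + 1) • Λ.d mu := by
    rw [hx.d_apply zero_le hN, tsub_zero]
  have hcr : Λ.r (x 0 ((M + 1) • Λ.d mu)) = Λ.r mu := by
    rw [hx.r_apply zero_le hN, hx.2.1]
  have hcycle : Λ.IsCycle (x 0 ((M + 1) • Λ.d mu)) :=
    ⟨by rw [hcd]; exact smul_ne_zero M.succ_ne_zero hmu,
      by rw [hcr, hx.s_apply zero_le hN, hx.vertex_nsmul]⟩
  have hle : Λ.d lam ≤ (M + 1) • Λ.d mu :=
    hM.trans (nsmul_le_nsmul_left zero_le M.le_succ)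
  obtain ⟨α, hα, hcomp⟩ := hnoent.exists_comp_eq hcycle (hr.trans hcr.symm) (hcd.symm ▸ hle)
  refine (eq_of_comp_eq_comp hα ((hx.s_apply zero_le hd).trans (hx.r_apply hle hN).symm)
    ?_ (hcomp.trans (hx.comp_apply zero_le hle hN).symm)).1
  rw [hx.d_apply zero_le hd, tsub_zero]

theorem eq_segment_of_r_eq_vertex (hnoent : Λ.NoCycleHasEntrance) (hx : Λ.IsInfIterate mu x)
    (hp : support p ⊆ support (Λ.d mu)) {lam : Λ.Path} (hr : Λ.r lam = x p p)
    (hd : support (Λ.d lam) ⊆ support (Λ.d mu)) : lam = x p (p + Λ.d lam) := by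
  -- Prefixing `x 0 p` moves `lam` to the base vertex `r mu`; then cancel the common prefix.
  have hpd := support_add_subset_of hp hd
  have hs : Λ.s (x 0 p) = Λ.r lam := (hx.s_apply zero_le hp).trans hr.symm
  have hdcomp : Λ.d (Λ.comp (x 0 p) lam) = p + Λ.d lam := by
    rw [Λ.d_comp _ _ hs, hx.d_apply zero_le hp, tsub_zero]
  have hcomp := hx.eq_segment_of_r_eq hnoent (lam := Λ.comp (x 0 p) lam)
    (by rw [Λ.r_comp _ _ hs, hx.r_apply zero_le hp, hx.2.1]) (hdcomp ▸ hpd)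
  rw [hdcomp, ← hx.comp_apply zero_le le_self_add hpd] at hcomp
  exact (eq_of_comp_eq_comp hs ((hx.s_apply zero_le hp).trans
    (hx.r_apply le_self_add hpd).symm) rfl hcomp).2

theorem vertex_add_eq_of_vertex_eq (hnoent : Λ.NoCycleHasEntrance) (hx : Λ.IsInfIterate mu x)
    {t : Fin k → ℕ} (hp : support p ⊆ support (Λ.d mu)) (hq : support q ⊆ support (Λ.d mu))
    (ht : support t ⊆ support (Λ.d mu)) (hpq : x p p = x q q) :
    x (p + t) (p + t) = x (q + t) (q + t) := by
  have hpt := support_add_subset_of hp ht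
  have hqt := support_add_subset_of hq ht
  have hd : Λ.d (x q (q + t)) = t := by rw [hx.d_apply le_self_add hqt, add_tsub_cancel_left]
  have h := hx.eq_segment_of_r_eq_vertex hnoent hp
    (by rw [hx.r_apply le_self_add hqt, hpq]) (hd ▸ ht)
  rw [hd] at h
  rw [← hx.s_apply le_self_add hpt, ← h, hx.s_apply le_self_add hqt]

end IsInfIterate

end KGraph

theorem stmt15_general {k : ℕ} (Λ : KGraph k) (hnoent : Λ.NoCycleHasEntrance)
    (mu : Λ.Path)
    (x : (Fin k → ℕ) → (Fin k → ℕ) → Λ.Path) (hx : Λ.IsInfIterate mu x) :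
    ∃ G : AddSubgroup (Fin k → ℤ),
      (G : Set (Fin k → ℤ)) =
        {g | ∃ p q : Fin k → ℕ,
          (∀ i, (p i : ℕ∞) ≤ Λ.degInf mu i) ∧ (∀ i, (q i : ℕ∞) ≤ Λ.degInf mu i) ∧
          x p p = x q q ∧ g = fun i => (p i : ℤ) - (q i : ℤ)} := by
  simp only [KGraph.coe_le_degInf_iff]
  refine ⟨{ carrier := _, zero_mem' := ?zero, add_mem' := ?add, neg_mem' := ?neg }, rfl⟩
  case zero => exact ⟨0, 0, by simp, by simp, rfl, by ext; simp⟩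
  case add =>
    rintro _ _ ⟨p, q, hp, hq, hpq, rfl⟩ ⟨p', q', hp', hq', hpq', rfl⟩
    refine ⟨p + p', q + q', support_add_subset_of hp hp', support_add_subset_of hq hq', ?_,
      by ext; simp only [Pi.add_apply, Nat.cast_add]; ring⟩
    calc x (p + p') (p + p') = x (p' + q) (p' + q) := by
          rw [hx.vertex_add_eq_of_vertex_eq hnoent hp hq hp' hpq, add_comm]
      _ = x (q + q') (q + q') := by
          rw [hx.vertex_add_eq_of_vertex_eq hnoent hp' hq' hq hpq', add_comm]
  case neg =>
    rintro _ ⟨p, q, hp, hq, hpq, rfl⟩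
    exact ⟨q, p, hq, hp, hpq.symm, by ext; simp⟩

/-- Lemma 5.8. For an initial cycle `μ` (with `μ^∞` encoded by any path
function `x` satisfying its characterising properties), the set
`G_μ = {m − n : m, n ≤ d(μ^∞), μ^∞(m) = μ^∞(n)}` is a subgroup of `ℤᵏ`. -/
theorem stmt15 {k : ℕ} (Λ : KGraph k) (hRF : Λ.RowFinite) (hLC : Λ.LocallyConvex)
    (hfin : {v : Λ.Path | Λ.IsVertex v}.Finite) (hnoent : Λ.NoCycleHasEntrance)
    (mu : Λ.Path) (hmu : Λ.IsInitialCycle mu)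
    (x : (Fin k → ℕ) → (Fin k → ℕ) → Λ.Path) (hx : Λ.IsInfIterate mu x) :
    ∃ G : AddSubgroup (Fin k → ℤ),
      (G : Set (Fin k → ℤ)) =
        {g | ∃ p q : Fin k → ℕ,
          (∀ i, (p i : ℕ∞) ≤ Λ.degInf mu i) ∧ (∀ i, (q i : ℕ∞) ≤ Λ.degInf mu i) ∧
          x p p = x q q ∧ g = fun i => (p i : ℤ) - (q i : ℤ)} :=
  stmt15_general Λ hnoent mu x hx
end
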